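/- Let n ≥ 2, a ∈ Bⁿ with 0 < |a| < 1, and x ∈ Bⁿ. Then 1/(1−|x|) ≤ (1+|a|) · ‖T_a'(x)‖/(1−|T_a(x)|), where ‖T_a'(x)‖ denotes the operator norm of the (conformal) derivative of T_a at x. -/

import Mathlib

open Metric Set Real Filter

/-- `x* = x / |x|²`, the inversion in the unit sphere (with junk value `0* = 0`). -/
noncomputable def invPt {E : Type*} [NormedAddCommGroup E] [InnerProductSpace ℝ E] (x : E) : E :=
  (‖x‖ ^ 2)⁻¹ • x

/-- Inversion `σ_a(x) = a* + r² (x - a*)*` in the sphere `S^{n-1}(a*, r)`, `r² = |a|⁻² - 1`. -/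
noncomputable def sigmaMap {E : Type*} [NormedAddCommGroup E] [InnerProductSpace ℝ E]
    (a x : E) : E :=
  invPt a + ((‖a‖ ^ 2)⁻¹ - 1) • invPt (x - invPt a)

/-- Reflection `p_a` in the hyperplane through the origin orthogonal to `a`. -/
noncomputable def reflMap {E : Type*} [NormedAddCommGroup E] [InnerProductSpace ℝ E]
    (a x : E) : E :=
  x - ((2 * (inner ℝ x a : ℝ) / ‖a‖ ^ 2) : ℝ) • a

open Classical in
/-- The Möbius transformation `T_a = p_a ∘ σ_a` of the unit ball onto itself with `T_a a = 0`,
with `T_0 = id`. -/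
noncomputable def TMap {E : Type*} [NormedAddCommGroup E] [InnerProductSpace ℝ E]
    (a : E) (x : E) : E :=
  if a = 0 then x else reflMap a (sigmaMap a x)

/-!
`T_a` is the reflection `p_a` composed with the inversion `σ_a` in the sphere `S(a*, r)`, which
is orthogonal to the unit sphere (`|a*|² = 1 + r²`). Hence `T_a'(x)` is a similarity with ratio
`λ = r² / |x - a*|²`, and orthogonality gives `1 - |T_a x|² = λ (1 - |x|²)`. Since
`|a| |x - a*| ≥ 1 - |a| |x|`, we get `λ (1 - |a| |x|)² ≤ 1 - |a|²`, whence
`|T_a x| ≥ |x| - |a|` and `1 + |x| ≤ (1 + |a|)(1 + |T_a x|)`. Dividing the identity by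
`(1 + |T_a x|)(1 - |T_a x|)` gives the bound.
-/

/-- The scalar form of `|T_a x| ≥ (|x| - |a|) / (1 - |a| |x|) ≥ |x| - |a|`. -/
theorem sub_le_of_one_sub_sq_eq {A X T L : ℝ} (hA0 : 0 ≤ A) (hA1 : A ≤ 1) (hX0 : 0 ≤ X)
    (hX1 : X ≤ 1) (hT : 0 ≤ T) (hid : 1 - T ^ 2 = L * (1 - X ^ 2))
    (hL : L * (1 - A * X) ^ 2 ≤ 1 - A ^ 2) :
    X - A ≤ T := by
  have h : (X - A) ^ 2 ≤ (1 - A * X) ^ 2 * T ^ 2 := by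
    nlinarith [mul_le_mul_of_nonneg_right hL (by nlinarith : 0 ≤ 1 - X ^ 2)]
  have h1 : (1 - A * X) ^ 2 ≤ 1 := by nlinarith [mul_nonneg hA0 hX0, mul_le_one₀ hA1 hX0 hX1]
  nlinarith [mul_le_mul_of_nonneg_right h1 (sq_nonneg T)]

theorem one_div_one_sub_le {A X T L : ℝ} (hA0 : 0 ≤ A) (hA1 : A ≤ 1) (hX0 : 0 ≤ X)
    (hX1 : X < 1) (hT : 0 ≤ T) (hL0 : 0 < L) (hid : 1 - T ^ 2 = L * (1 - X ^ 2))
    (hL : L * (1 - A * X) ^ 2 ≤ 1 - A ^ 2) :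
    1 / (1 - X) ≤ (1 + A) * (L / (1 - T)) := by
  have hXT : 1 + X ≤ (1 + A) * (1 + T) := by
    nlinarith [sub_le_of_one_sub_sq_eq hA0 hA1 hX0 hX1.le hT hid hL, mul_nonneg hA0 hT]
  have hT1 : T < 1 := by nlinarith [mul_pos hL0 (by nlinarith : 0 < 1 - X ^ 2)]
  have : 1 - T ≤ (1 + A) * L * (1 - X) := by nlinarith
  rw [div_le_iff₀ (by linarith), mul_div_assoc', div_mul_eq_mul_div, le_div_iff₀ (by linarith)]
  linarith

theorem sq_sqrt_inv_sq_sub_one {t : ℝ} (h0 : 0 < t) (h1 : t ≤ 1) :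
    √((t ^ 2)⁻¹ - 1) ^ 2 = (t ^ 2)⁻¹ - 1 :=
  Real.sq_sqrt <| sub_nonneg.2 <| (one_le_inv₀ (by positivity)).2 (pow_le_one₀ h0.le h1)

open EuclideanGeometry

section

variable {E : Type*} [NormedAddCommGroup E] [InnerProductSpace ℝ E]

theorem reflMap_eq_reflection (a : E) : reflMap a = (ℝ ∙ a)ᗮ.reflection := by
  ext x
  rw [Submodule.reflection_orthogonal_apply, Submodule.reflection_singleton_apply, reflMap,
    real_inner_comm, neg_sub, RCLike.ofReal_real_eq_id, id, ← ofNat_smul_eq_nsmul ℝ, smul_smul,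
    mul_div_assoc]

theorem norm_invPt (x : E) : ‖invPt x‖ = ‖x‖⁻¹ := by
  rw [invPt, norm_smul, norm_inv, norm_pow, norm_norm]
  rcases eq_or_ne ‖x‖ 0 with h | h
  · simp [h]
  · field_simp

theorem sigmaMap_eq_inversion {a : E} (ha0 : a ≠ 0) (ha1 : ‖a‖ ≤ 1) :
    sigmaMap a = inversion (invPt a) √((‖a‖ ^ 2)⁻¹ - 1) := by
  ext x
  rw [sigmaMap, inversion, add_comm, vadd_eq_add, vsub_eq_sub]
  congr 1
  rw [show invPt (x - invPt a) = (‖x - invPt a‖ ^ 2)⁻¹ • (x - invPt a) from rfl, smul_smul,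
    div_pow, sq_sqrt_inv_sq_sub_one (norm_pos_iff.2 ha0) ha1, dist_eq_norm, div_eq_mul_inv]

theorem TMap_eq_reflection_comp_inversion {a : E} (ha0 : a ≠ 0) (ha1 : ‖a‖ ≤ 1) :
    TMap a = (ℝ ∙ a)ᗮ.reflection ∘ inversion (invPt a) √((‖a‖ ^ 2)⁻¹ - 1) := by
  ext x
  rw [TMap, if_neg ha0, reflMap_eq_reflection, sigmaMap_eq_inversion ha0 ha1, Function.comp_apply]

theorem norm_fderiv_reflection_comp_inversion (K : Submodule ℝ E) [K.HasOrthogonalProjection]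
    {c x : E} (R : ℝ) (hx : x ≠ c) :
    ‖fderiv ℝ (K.reflection ∘ inversion c R) x‖ = (R / dist x c) ^ 2 := by
  have : Nontrivial E := nontrivial_of_ne x c hx
  have h : HasFDerivAt (K.reflection ∘ inversion c R)
      (K.reflection.toLinearIsometry.toContinuousLinearMap.comp
        ((R / dist x c) ^ 2 • ((ℝ ∙ (x - c))ᗮ.reflection : E →L[ℝ] E))) x :=
    K.reflection.toContinuousLinearEquiv.hasFDerivAt.comp x (hasFDerivAt_inversion hx)
  rw [h.fderiv, LinearIsometry.norm_toContinuousLinearMap_comp, norm_smul,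
    LinearIsometryEquiv.norm_toContinuousLinearMap, mul_one, Real.norm_of_nonneg (sq_nonneg _)]

/-- `‖c‖ ^ 2 = 1 + R ^ 2` says that the sphere of inversion is orthogonal to the unit sphere. -/
theorem one_sub_norm_inversion_sq {c x : E} {R : ℝ} (hR : ‖c‖ ^ 2 = 1 + R ^ 2)
    (hx : x ≠ c) :
    1 - ‖inversion c R x‖ ^ 2 = (R / dist x c) ^ 2 * (1 - ‖x‖ ^ 2) := by
  have hd : ‖x - c‖ ≠ 0 := norm_ne_zero_iff.2 (sub_ne_zero.2 hx)
  have hxc : ‖x‖ ^ 2 = ‖x - c‖ ^ 2 + 2 * inner ℝ (x - c) c + ‖c‖ ^ 2 := by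
    rw [← norm_add_sq_real, sub_add_cancel]
  rw [inversion, vadd_eq_add, vsub_eq_sub, norm_add_sq_real, norm_smul, real_inner_smul_left,
    dist_eq_norm, hxc, hR, Real.norm_of_nonneg (sq_nonneg _)]
  field_simp
  ring

theorem sq_div_dist_invPt_mul_sq_le {a x : E} (ha0 : a ≠ 0) (ha1 : ‖a‖ ≤ 1)
    (hx : ‖x‖ ≤ 1) :
    (√((‖a‖ ^ 2)⁻¹ - 1) / dist x (invPt a)) ^ 2 * (1 - ‖a‖ * ‖x‖) ^ 2 ≤ 1 - ‖a‖ ^ 2 := by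
  have hA : 0 < ‖a‖ := norm_pos_iff.2 ha0
  have hd : 1 - ‖a‖ * ‖x‖ ≤ ‖a‖ * dist x (invPt a) := by
    have := norm_sub_norm_le (invPt a) x
    rw [norm_invPt, ← dist_eq_norm, dist_comm] at this
    calc 1 - ‖a‖ * ‖x‖ = ‖a‖ * (‖a‖⁻¹ - ‖x‖) := by field_simp
      _ ≤ _ := by gcongr
  rw [div_pow, sq_sqrt_inv_sq_sub_one (norm_pos_iff.2 ha0) ha1]
  rcases eq_or_ne (dist x (invPt a)) 0 with h0 | h0
  · simp [h0, pow_le_one₀ hA.le ha1]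
  have hAx : 0 ≤ 1 - ‖a‖ * ‖x‖ := sub_nonneg.2 (mul_le_one₀ ha1 (norm_nonneg x) hx)
  have hsq : (1 - ‖a‖ * ‖x‖) ^ 2 / ‖a‖ ^ 2 ≤ dist x (invPt a) ^ 2 := by
    rw [div_le_iff₀ (by positivity), ← mul_pow, mul_comm (dist _ _)]
    exact pow_le_pow_left₀ hAx hd 2
  calc ((‖a‖ ^ 2)⁻¹ - 1) / dist x (invPt a) ^ 2 * (1 - ‖a‖ * ‖x‖) ^ 2
      = (1 - ‖a‖ ^ 2) * ((1 - ‖a‖ * ‖x‖) ^ 2 / ‖a‖ ^ 2) / dist x (invPt a) ^ 2 := by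
        field_simp
    _ ≤ (1 - ‖a‖ ^ 2) * dist x (invPt a) ^ 2 / dist x (invPt a) ^ 2 := by
        have : 0 ≤ 1 - ‖a‖ ^ 2 := sub_nonneg.2 (pow_le_one₀ hA.le ha1)
        gcongr
    _ = 1 - ‖a‖ ^ 2 := by field_simp

end

theorem qh_density_TMap_bound_general {n : ℕ}
    (a : EuclideanSpace ℝ (Fin n)) (ha0 : 0 < ‖a‖) (ha1 : ‖a‖ < 1)
    (x : EuclideanSpace ℝ (Fin n)) (hx : x ∈ ball (0 : EuclideanSpace ℝ (Fin n)) 1) :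
    1 / (1 - ‖x‖) ≤ (1 + ‖a‖) * (‖fderiv ℝ (TMap a) x‖ / (1 - ‖TMap a x‖)) := by
  have ha : a ≠ 0 := norm_pos_iff.1 ha0
  have hx1 : ‖x‖ < 1 := mem_ball_zero_iff.1 hx
  have hxc : x ≠ invPt a := by
    rintro rfl
    exact (one_lt_inv₀ ha0).2 ha1 |>.not_gt (norm_invPt a ▸ hx1)
  have hR : 0 < √((‖a‖ ^ 2)⁻¹ - 1) :=
    Real.sqrt_pos.2 <| sub_pos.2 <|
      (one_lt_inv₀ (by positivity)).2 (pow_lt_one₀ ha0.le ha1 two_ne_zero)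
  have hc : ‖invPt a‖ ^ 2 = 1 + √((‖a‖ ^ 2)⁻¹ - 1) ^ 2 := by
    rw [sq_sqrt_inv_sq_sub_one ha0 ha1.le, norm_invPt, inv_pow]
    ring
  rw [TMap_eq_reflection_comp_inversion ha ha1.le, norm_fderiv_reflection_comp_inversion _ _ hxc,
    Function.comp_apply, LinearIsometryEquiv.norm_map]
  exact one_div_one_sub_le ha0.le ha1.le (norm_nonneg x) hx1 (norm_nonneg _)
    (pow_pos (div_pos hR (dist_pos.2 hxc)) 2) (one_sub_norm_inversion_sq hc hxc)
    (sq_div_dist_invPt_mul_sq_le ha ha1.le hx1.le)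

/-- `1 / (1 - |x|) ≤ (1 + |a|) ‖T_a'(x)‖ / (1 - |T_a(x)|)`, where `‖T_a'(x)‖`
is the operator norm of the derivative of `T_a` at `x`. -/
theorem qh_density_TMap_bound {n : ℕ} (hn : 2 ≤ n)
    (a : EuclideanSpace ℝ (Fin n)) (ha0 : 0 < ‖a‖) (ha1 : ‖a‖ < 1)
    (x : EuclideanSpace ℝ (Fin n)) (hx : x ∈ ball (0 : EuclideanSpace ℝ (Fin n)) 1) :
    1 / (1 - ‖x‖) ≤ (1 + ‖a‖) * (‖fderiv ℝ (TMap a) x‖ / (1 - ‖TMap a x‖)) :=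
  qh_density_TMap_bound_general a ha0 ha1 x hx
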